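/- arXiv:math/0507117 — 2 statements merged into one kernel-verified Lean document; each statement's English description precedes it below -/
import Mathlib

section
/- For all integers m, n with 1 ≤ m ≤ n: Σ over all functions η : Fin m → Finset(Fin n) such that η i ≠ ∅ for every i and η i ∩ η j = ∅ for all i ≠ j, of (−1)^{(Σ_i card(η i)) − m}, equals 1 + Σ_{k=1}^{m−1} (−1)^{n+k+1} · binom(m, k+1) · k^n. (Equivalently, χ̃(Hom(K_m,K_n)) = Σ_{k=1}^{m−1} (−1)^{n+k+1} binom(m,k+1) k^n.) -/
/-!
A family `η : ι → Finset κ` of pairwise disjoint sets is the same thing as a map `κ → Option ι`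
sending each colour to the vertex whose set contains it, so summing `∏ i, y i ^ #(η i)` over all
such families gives `(1 + ∑ i, y i) ^ #κ`. Nonemptiness is imposed by inclusion–exclusion: for
`η i ≠ ∅` the weight `x ^ #(η i)` equals `x ^ #(η i) - 0 ^ #(η i)`, and the latter vanishes when
`η i = ∅`; expanding the product over `i` gives
`∑ k, (-1) ^ (m - k) * m.choose k * (1 + k * x) ^ n`. At `x = -1`, after multiplying by
`(-1) ^ m`, the terms `k = 0` and `k = 1` contribute `1` and `0` (the latter as `n ≥ 1` or
`m = 0`), and the remaining ones are those of the theorem.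
-/

open Classical

open Finset Function

noncomputable def disjointFamilies (ι κ : Type*) [Fintype ι] [Fintype κ] :
    Finset (ι → Finset κ) :=
  univ.filter fun η => Pairwise (Disjoint on η)

noncomputable def disjointNonemptyFamilies (ι κ : Type*) [Fintype ι] [Fintype κ] :
    Finset (ι → Finset κ) :=
  (disjointFamilies ι κ).filter fun η => ∀ i, η i ≠ ∅

section

variable {ι κ : Type*}

@[simp]
lemma mem_disjointFamilies [Fintype ι] [Fintype κ] {η : ι → Finset κ} :
    η ∈ disjointFamilies ι κ ↔ Pairwise (Disjoint on η) := by
  simp [disjointFamilies]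

@[simp]
lemma mem_disjointNonemptyFamilies [Fintype ι] [Fintype κ] {η : ι → Finset κ} :
    η ∈ disjointNonemptyFamilies ι κ ↔ Pairwise (Disjoint on η) ∧ ∀ i, η i ≠ ∅ := by
  simp [disjointNonemptyFamilies]

lemma prod_pow_card_sub_zero_pow_card [Fintype ι] {R : Type*} [CommRing R] (x : R)
    (η : ι → Finset κ) :
    ∏ i, (x ^ #(η i) - 0 ^ #(η i)) = if ∀ i, η i ≠ ∅ then x ^ ∑ i, #(η i) else 0 := by
  have h : ∀ i, x ^ #(η i) - 0 ^ #(η i) = if η i ≠ ∅ then x ^ #(η i) else 0 := by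
    intro i
    by_cases hi : η i = ∅
    · simp [hi]
    · rw [if_pos hi, zero_pow (card_ne_zero.mpr (nonempty_iff_ne_empty.mpr hi)), sub_zero]
  simp only [h, Fintype.prod_ite_zero, prod_pow_eq_pow_sum]

lemma prod_ite_mem_zero_pow [Fintype ι] [DecidableEq ι] {R : Type*} [CommMonoidWithZero R]
    (x : R) (t : Finset ι) (k : ι → ℕ) :
    ∏ i, (if i ∈ t then 0 else x) ^ k i = (∏ i ∈ univ \ t, x ^ k i) * ∏ i ∈ t, 0 ^ k i := by
  simp [ite_pow, prod_ite, mul_comm, sdiff_eq_filter]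

variable [DecidableEq ι] [Fintype κ]

def fiberFamily (f : κ → Option ι) (i : ι) : Finset κ := {c | f c = some i}

@[simp]
lemma mem_fiberFamily {f : κ → Option ι} {i : ι} {c : κ} :
    c ∈ fiberFamily f i ↔ f c = some i := by
  simp [fiberFamily]

lemma fiberFamily_injective : Injective (fiberFamily : (κ → Option ι) → ι → Finset κ) := by
  intro f g h
  funext c
  exact Option.ext fun i => by simpa using congr(c ∈ $h i)

lemma pairwise_disjoint_fiberFamily (f : κ → Option ι) :
    Pairwise (Disjoint on fiberFamily f) := by
  intro i j hij
  simp only [onFun, disjoint_left, mem_fiberFamily]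
  intro c hi hj
  exact hij (Option.some_inj.mp (hi.symm.trans hj))

lemma exists_fiberFamily_eq {η : ι → Finset κ} (hη : Pairwise (Disjoint on η)) :
    ∃ f, fiberFamily f = η := by
  have owner : ∀ c, ∃ o : Option ι, ∀ i, o = some i ↔ c ∈ η i := by
    intro c
    by_cases hc : ∃ i, c ∈ η i
    · obtain ⟨i, hi⟩ := hc
      refine ⟨some i, fun j => ⟨?_, fun hj => ?_⟩⟩
      · rintro ⟨⟩
        exact hi
      · by_contra hij
        exact disjoint_left.mp (hη fun h => hij (congrArg some h)) hi hj
    · push Not at hc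
      exact ⟨none, fun i => by simp [hc i]⟩
  choose f hf using owner
  exact ⟨f, funext fun i => Finset.ext fun c => by simp [hf]⟩

variable [Fintype ι]

lemma image_fiberFamily :
    (univ : Finset (κ → Option ι)).image fiberFamily = disjointFamilies ι κ := by
  ext η
  simp only [mem_image, mem_univ, true_and, mem_disjointFamilies]
  exact ⟨fun ⟨f, hf⟩ => hf ▸ pairwise_disjoint_fiberFamily f, exists_fiberFamily_eq⟩

lemma prod_pow_card_fiberFamily {R : Type*} [CommMonoid R] (y : ι → R) (f : κ → Option ι) :
    ∏ i, y i ^ #(fiberFamily f i) = ∏ c, (f c).elim 1 y := by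
  symm
  rw [← prod_fiberwise univ f, Fintype.prod_option,
    prod_eq_one fun c hc => by simp [(mem_filter.mp hc).2], one_mul]
  refine prod_congr rfl fun i _ => ?_
  rw [prod_congr rfl fun c hc => by rw [(mem_filter.mp hc).2], prod_const]
  rfl

theorem sum_prod_pow_card_disjointFamilies {R : Type*} [CommSemiring R] (y : ι → R) :
    ∑ η ∈ disjointFamilies ι κ, ∏ i, y i ^ #(η i) = (1 + ∑ i, y i) ^ Fintype.card κ := by
  calc _ = ∑ f : κ → Option ι, ∏ i, y i ^ #(fiberFamily f i) := by
        rw [← image_fiberFamily, sum_image fun f _ g _ h => fiberFamily_injective h]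
    _ = ∏ _c : κ, ∑ o : Option ι, o.elim 1 y := by
        simp only [prod_pow_card_fiberFamily, Fintype.prod_sum]
    _ = _ := by simp [Fintype.sum_option]

theorem sum_pow_sum_card_disjointNonemptyFamilies {R : Type*} [CommRing R] (x : R) :
    ∑ η ∈ disjointNonemptyFamilies ι κ, x ^ ∑ i, #(η i)
      = ∑ k ∈ range (Fintype.card ι + 1),
          (-1) ^ (Fintype.card ι - k) * (Fintype.card ι).choose k * (1 + k • x) ^ Fintype.card κ := by
  calc _ = ∑ η ∈ disjointFamilies ι κ, ∏ i, (x ^ #(η i) - 0 ^ #(η i)) := by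
        simp only [prod_pow_card_sub_zero_pow_card, disjointNonemptyFamilies, sum_filter]
    _ = ∑ η ∈ disjointFamilies ι κ, ∑ t ∈ univ.powerset,
          (-1) ^ #t * ∏ i, (if i ∈ t then 0 else x) ^ #(η i) := by
        simp only [prod_sub, prod_ite_mem_zero_pow, mul_assoc]
    _ = ∑ t : Finset ι, (-1) ^ #t * (1 + #tᶜ • x) ^ Fintype.card κ := by
        rw [sum_comm, powerset_univ]
        refine sum_congr rfl fun t _ => ?_
        rw [← mul_sum, sum_prod_pow_card_disjointFamilies]
        simp [sum_ite, filter_not, card_univ_sdiff, card_compl]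
    _ = ∑ t ∈ univ.powerset, (-1) ^ (Fintype.card ι - #t) * (1 + #t • x) ^ Fintype.card κ := by
        rw [powerset_univ (α := ι)]
        exact Fintype.sum_equiv (compl_involutive.toPerm _) _ _ fun t => by
          simp [card_compl, Nat.sub_sub_self (card_le_univ t)]
    _ = _ := by
        rw [sum_powerset_apply_card
          fun k => (-1) ^ (Fintype.card ι - k) * (1 + k • x) ^ Fintype.card κ, card_univ]
        exact sum_congr rfl fun k _ => by ring

end

lemma neg_one_pow_sub_of_le {R : Type*} [Monoid R] [HasDistribNeg R] {a b : ℕ} (h : b ≤ a) :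
    (-1 : R) ^ (a - b) = (-1) ^ b * (-1) ^ a := by
  obtain ⟨c, rfl⟩ := Nat.exists_eq_add_of_le h
  rw [Nat.add_sub_cancel_left, pow_add, ← mul_assoc, ← pow_add, ← two_mul, pow_mul, neg_one_sq,
    one_pow, one_mul]

lemma neg_one_pow_mul_sum_choose_mul_one_sub_pow (m n : ℕ) (hmn : m ≤ n) :
    (-1 : ℤ) ^ m * ∑ k ∈ range (m + 1), (-1) ^ (m - k) * (m.choose k) * (1 + k • (-1 : ℤ)) ^ n
      = 1 + ∑ k ∈ Ico 1 m, (-1 : ℤ) ^ (n + k + 1) * (m.choose (k + 1)) * (k : ℤ) ^ n := by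
  have hfirst : (m.choose 1 : ℤ) * 0 ^ n = 0 := by
    rcases n.eq_zero_or_pos with rfl | hn
    · simp [Nat.le_zero.mp hmn]
    · simp [hn.ne']
  calc _ = ∑ k ∈ range (m + 1), (-1) ^ k * (m.choose k) * (1 - k : ℤ) ^ n := by
        rw [mul_sum]
        refine sum_congr rfl fun k hk => ?_
        rw [neg_one_pow_sub_of_le (Nat.lt_succ_iff.mp (mem_range.mp hk)), nsmul_eq_mul]
        ring_nf
        simp
    _ = 1 + ∑ k ∈ range m, (-1 : ℤ) ^ (n + k + 1) * (m.choose (k + 1)) * (k : ℤ) ^ n := by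
        rw [sum_range_succ', add_comm]
        congr 1
        · simp
        · refine sum_congr rfl fun k _ => ?_
          rw [Nat.cast_succ, show 1 - ((k : ℤ) + 1) = -k by ring, neg_pow]
          ring
    _ = _ := by
        congr 1
        refine (sum_subset (fun k hk => by simp at hk ⊢; omega) fun k hk hk' => ?_).symm
        obtain rfl : k = 0 := by simp at hk hk'; omega
        rw [mul_assoc, Nat.cast_zero, zero_add, hfirst, mul_zero]

theorem cohomology_of_colorings_of_cycles_stmt2_general
    (m n : ℕ) (hmn : m ≤ n) :
    ∑ η ∈ Finset.univ.filter (fun η : Fin m → Finset (Fin n) =>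
        (∀ i, η i ≠ ∅) ∧ ∀ i j, i ≠ j → η i ∩ η j = ∅),
      (-1 : ℤ) ^ ((∑ i, (η i).card) - m)
    = 1 + ∑ k ∈ Finset.Ico 1 m,
        (-1 : ℤ) ^ (n + k + 1) * (m.choose (k + 1)) * (k : ℤ) ^ n := by
  have hcells : univ.filter (fun η : Fin m → Finset (Fin n) =>
      (∀ i, η i ≠ ∅) ∧ ∀ i j, i ≠ j → η i ∩ η j = ∅) = disjointNonemptyFamilies (Fin m) (Fin n) := by
    ext η
    simp [Pairwise, onFun, disjoint_iff_inter_eq_empty, and_comm]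
  have hsign : ∀ η ∈ disjointNonemptyFamilies (Fin m) (Fin n),
      (-1 : ℤ) ^ ((∑ i, #(η i)) - m) = (-1) ^ m * (-1) ^ ∑ i, #(η i) := by
    intro η hη
    refine neg_one_pow_sub_of_le ?_
    simpa using card_nsmul_le_sum univ (fun i => #(η i)) 1
      fun i _ => card_pos.mpr (nonempty_iff_ne_empty.mpr ((mem_disjointNonemptyFamilies.mp hη).2 i))
  rw [hcells, sum_congr rfl hsign, ← mul_sum, sum_pow_sum_card_disjointNonemptyFamilies,
    Fintype.card_fin, Fintype.card_fin]
  exact neg_one_pow_mul_sum_choose_mul_one_sub_pow m n hmn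

/-- **Euler characteristic of `Hom(K_m,K_n)` (Corollary 6.3 / `crl:chi1`).**
For `1 ≤ m ≤ n`,
`χ̃(Hom(K_m,K_n)) = Σ_{k=1}^{m−1} (−1)^{n+k+1} binom(m,k+1) k^n`,
where the cells of `Hom(K_m,K_n)` are indexed by tuples of pairwise disjoint
nonempty subsets of the color set. -/
theorem cohomology_of_colorings_of_cycles_stmt2
    (m n : ℕ) (hm : 1 ≤ m) (hmn : m ≤ n) :
    ∑ η ∈ Finset.univ.filter (fun η : Fin m → Finset (Fin n) =>
        (∀ i, η i ≠ ∅) ∧ ∀ i j, i ≠ j → η i ∩ η j = ∅),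
      (-1 : ℤ) ^ ((∑ i, (η i).card) - m)
    = 1 + ∑ k ∈ Finset.Ico 1 m,
        (-1 : ℤ) ^ (n + k + 1) * (m.choose (k + 1)) * (k : ℤ) ^ n :=
  cohomology_of_colorings_of_cycles_stmt2_general m n hmn
end

section
/- Let m ≥ 2 and g ≥ 1 be integers and let n = g·m + 1. Then the flip graph on the g-spread m-element subsets of ZMod n is isomorphic, as a simple graph, to the cycle graph on g·m+1 vertices; equivalently, it has exactly g·m+1 vertices, each vertex has exactly two neighbors, and it is connected. (This expresses that the complex Φ_{m,gm+1,g} is a cycle of length gm+1.) -/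
/-!
The translates `a, a + 1, …, a + g - 1` of the points `a` of a `g`-spread `m`-subset of
`ZMod (g * m + 1)` are pairwise disjoint, so they miss exactly one point `p`, and walking from
`p + 1` in steps of `g` never leaves the set: the vertices are exactly the progressions
`c, c + g, …, c + (m - 1) * g`. As `m * g = -1`, lowering the first point `c` by one gives the
progression starting at `c + g`, raising the last one gives the one starting at `c - g`, and every
other flip brings two points closer than `g`. So the flip graph is the orbit of `c ↦ c + g`,
a single cycle because `g` is a unit modulo `g * m + 1`.
-/

open Classical

/-- The cyclic distance between two elements of `ZMod n`:
`dist(a,b) = min((a−b).val, (b−a).val)`. -/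
def cycDist {n : ℕ} (a b : ZMod n) : ℕ := min (a - b).val (b - a).val

/-- Adjacency in the flip graph: `S'` is obtained from `S` by replacing exactly
one element `a ∈ S` with `a + 1` or `a − 1`. -/
def flipAdj {n : ℕ} (S S' : Finset (ZMod n)) : Prop :=
  S ≠ S' ∧ ∃ a ∈ S, S' = insert (a + 1) (S.erase a) ∨ S' = insert (a - 1) (S.erase a)

open Finset Pointwise

section Finset

lemma notMem_erase_of_card_insert_erase {α : Type*} [DecidableEq α] {s : Finset α} {a x : α}
    (ha : a ∈ s) (hcard : (insert x (s.erase a)).card = s.card) : x ∉ s.erase a := by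
  intro hx
  rw [insert_eq_of_mem hx, card_erase_of_mem ha] at hcard
  have := card_pos.2 ⟨a, ha⟩
  omega

lemma eq_insert_erase_of_card_insert_erase {α : Type*} [DecidableEq α] {s : Finset α} {a x : α}
    (ha : a ∈ s) (hcard : (insert x (s.erase a)).card = s.card) :
    s = insert a ((insert x (s.erase a)).erase x) := by
  rw [erase_insert (notMem_erase_of_card_insert_erase ha hcard), insert_erase ha]

end Finset

section NatCast

variable {n : ℕ}

lemma mul_lt_of_eq_mul_add_one {m g : ℕ} (hn : n = g * m + 1) : m * g < n := by
  rw [hn, mul_comm]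
  exact Nat.lt_succ_self _

lemma natCast_inj_of_lt {a b : ℕ} (ha : a < n) (hb : b < n) :
    (a : ZMod n) = b ↔ a = b := by
  rw [ZMod.natCast_eq_natCast_iff', Nat.mod_eq_of_lt ha, Nat.mod_eq_of_lt hb]

lemma natCast_ne_zero_of_lt {k : ℕ} (hk : 0 < k) (hkn : k < n) : (k : ZMod n) ≠ 0 := by
  rw [Ne, ZMod.natCast_eq_zero_iff]
  exact fun h => (Nat.le_of_dvd hk h).not_gt hkn

lemma natCast_mul_eq_neg_one {m g : ℕ} (hn : n = g * m + 1) : (g : ZMod n) * m = -1 := by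
  have h : ((g * m + 1 : ℕ) : ZMod n) = 0 := by rw [← hn]; exact ZMod.natCast_self n
  push_cast at h
  linear_combination h

lemma isUnit_natCast_of_eq_mul_add_one {m g : ℕ} (hn : n = g * m + 1) : IsUnit (g : ZMod n) :=
  .of_mul_eq_one (-(m : ZMod n)) (by linear_combination -natCast_mul_eq_neg_one hn)

end NatCast

section Spread

variable {n g : ℕ}

lemma cycDist_comm (a b : ZMod n) : cycDist a b = cycDist b a := min_comm _ _

lemma cycDist_add_natCast_le (a : ZMod n) (k : ℕ) : cycDist (a + (k : ZMod n)) a ≤ k := by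
  rw [cycDist, add_sub_cancel_left, ZMod.val_natCast]
  exact (min_le_left _ _).trans (Nat.mod_le _ _)

lemma le_cycDist_of_sub_eq_natCast [NeZero n] {a b : ZMod n} {d : ℕ} (h : a - b = d)
    (hg : 0 < g) (hgd : g ≤ d) (hdn : d + g ≤ n) : g ≤ cycDist a b := by
  have hab : (a - b).val = d := by rw [h, ZMod.val_natCast_of_lt (by omega)]
  have hba : (b - a).val = n - d := by
    rw [← neg_sub, ZMod.neg_val', hab, Nat.mod_eq_of_lt (by omega)]
  rw [cycDist, hab, hba]
  omega

def IsSpread (g : ℕ) (S : Finset (ZMod n)) : Prop :=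
  ∀ a ∈ S, ∀ b ∈ S, a ≠ b → g ≤ cycDist a b

variable {S : Finset (ZMod n)}

lemma IsSpread.add_natCast_eq (hS : IsSpread g S) {a : ZMod n} {k : ℕ} (ha : a ∈ S)
    (hak : a + (k : ZMod n) ∈ S) (hk : k < g) : a + (k : ZMod n) = a := by
  by_contra h
  have := hS _ hak _ ha h
  have := cycDist_add_natCast_le a k
  omega

lemma IsSpread.eq_of_add_eq_add (hS : IsSpread g S) {a b : ZMod n} (ha : a ∈ S) (hb : b ∈ S)
    {i j : ℕ} (hi : i < g) (hj : j < g) (h : a + i = b + j) : a = b := by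
  wlog hij : i ≤ j generalizing a b i j
  · exact (this hb ha hj hi h.symm (by omega)).symm
  have hab : a = b + (j - i : ℕ) := by
    rw [Nat.cast_sub hij]
    linear_combination h
  rw [hab] at ha ⊢
  exact hS.add_natCast_eq hb ha (by omega)

lemma IsSpread.le_cycDist_of_insert_erase {a x y : ZMod n}
    (hS : IsSpread g (insert x (S.erase a))) (hcard : (insert x (S.erase a)).card = S.card)
    (ha : a ∈ S) (hy : y ∈ S.erase a) : g ≤ cycDist x y :=
  hS _ (mem_insert_self _ _) _ (mem_insert_of_mem hy)
    fun hxy => notMem_erase_of_card_insert_erase ha hcard (hxy ▸ hy)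

end Spread

section ArithProg

variable {n m g : ℕ}

def arithProg (m g : ℕ) (c : ZMod n) : Finset (ZMod n) :=
  (range m).image fun k => c + ((k * g : ℕ) : ZMod n)

lemma mem_arithProg {c x : ZMod n} :
    x ∈ arithProg m g c ↔ ∃ k < m, c + ((k * g : ℕ) : ZMod n) = x := by
  simp [arithProg]

lemma add_mem_arithProg_add_iff {c x : ZMod n} (d : ZMod n) :
    x + d ∈ arithProg m g (c + d) ↔ x ∈ arithProg m g c := by
  simp only [mem_arithProg, add_right_comm c d, add_left_inj]

lemma injOn_add_natCast_mul (hg : 0 < g) (hmg : m * g < n) (c : ZMod n) :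
    Set.InjOn (fun k : ℕ => c + ((k * g : ℕ) : ZMod n)) (range m) := by
  intro k hk j hj h
  simp only [coe_range, Set.mem_Iio] at hk hj
  have hkg : k * g < n := lt_of_le_of_lt (Nat.mul_le_mul_right g hk.le) hmg
  have hjg : j * g < n := lt_of_le_of_lt (Nat.mul_le_mul_right g hj.le) hmg
  exact Nat.eq_of_mul_eq_mul_right hg ((natCast_inj_of_lt hkg hjg).1 (add_left_cancel h))

lemma card_arithProg (hg : 0 < g) (hmg : m * g < n) (c : ZMod n) :
    (arithProg m g c).card = m := by
  rw [arithProg, card_image_of_injOn (injOn_add_natCast_mul hg hmg c), card_range]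

lemma isSpread_arithProg [NeZero n] (hg : 0 < g) (hmg : m * g < n) (c : ZMod n) :
    IsSpread g (arithProg m g c) := by
  intro a ha b hb hab
  obtain ⟨k, hk, rfl⟩ := mem_arithProg.1 ha
  obtain ⟨j, hj, rfl⟩ := mem_arithProg.1 hb
  wlog hjk : j < k generalizing j k
  · have hkj : k ≠ j := by rintro rfl; exact hab rfl
    rw [cycDist_comm]
    exact this j hj hb k hk ha hab.symm (by omega)
  have hsub :
      c + ((k * g : ℕ) : ZMod n) - (c + ((j * g : ℕ) : ZMod n)) = ((k - j) * g : ℕ) := by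
    rw [Nat.sub_mul, Nat.cast_sub (Nat.mul_le_mul_right g hjk.le)]
    ring
  have hfit : (k - j + 1) * g ≤ m * g := Nat.mul_le_mul_right g (by omega)
  refine le_cycDist_of_sub_eq_natCast hsub hg (Nat.le_mul_of_pos_left g (Nat.sub_pos_of_lt hjk)) ?_
  rw [add_mul, one_mul] at hfit
  omega

/-- The sum of the elements of `arithProg m g c` is `m * c` plus a constant, and `m` is
invertible modulo `g * m + 1`. -/
lemma arithProg_injective (hn : n = g * m + 1) (hg : 0 < g) :
    Function.Injective (arithProg m g : ZMod n → Finset (ZMod n)) := by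
  intro c c' h
  have hmg := mul_lt_of_eq_mul_add_one hn
  have hsum := congrArg (fun s => ∑ x ∈ s, x) h
  simp only [arithProg, sum_image (injOn_add_natCast_mul hg hmg _), sum_add_distrib, sum_const,
    card_range, nsmul_eq_mul] at hsum
  have hu := natCast_mul_eq_neg_one hn
  linear_combination (c - c') * hu - (g : ZMod n) * add_right_cancel hsum

lemma self_mem_arithProg (hm : 0 < m) (c : ZMod n) : c ∈ arithProg m g c :=
  mem_arithProg.2 ⟨0, hm, by simp⟩

end ArithProg

section Cycle

variable {n m g : ℕ}

lemma arithProg_add (hn : n = g * m + 1) (hg : 0 < g) (hm : 0 < m) (c : ZMod n) :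
    arithProg m g (c + (g : ZMod n)) = insert (c - 1) ((arithProg m g c).erase c) := by
  have hu := natCast_mul_eq_neg_one hn
  obtain ⟨m, rfl⟩ : ∃ m', m = m' + 1 := ⟨m - 1, by omega⟩
  ext x
  simp only [mem_insert, mem_erase, mem_arithProg]
  constructor
  · rintro ⟨k, hk, rfl⟩
    obtain rfl | hk := (Nat.lt_succ_iff.1 hk).eq_or_lt
    · left
      push_cast at hu ⊢
      linear_combination hu
    · refine Or.inr ⟨fun h => ?_, k + 1, by omega, by push_cast; ring⟩
      refine natCast_ne_zero_of_lt (n := n) (k := (k + 1) * g) (Nat.mul_pos k.succ_pos hg) ?_ ?_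
      · rw [hn, mul_comm]
        exact Nat.lt_succ_of_le (Nat.mul_le_mul_left g (by omega))
      · push_cast at h ⊢
        linear_combination h
  · rintro (rfl | ⟨hne, k, hk, rfl⟩)
    · refine ⟨m, m.lt_succ_self, ?_⟩
      push_cast at hu ⊢
      linear_combination hu
    · obtain _ | k := k
      · simp at hne
      · exact ⟨k, by omega, by push_cast; ring⟩

lemma arithProg_sub (hn : n = g * m + 1) (hg : 0 < g) (hm : 0 < m) (c : ZMod n) :
    arithProg m g (c - (g : ZMod n)) = insert (c - g) ((arithProg m g c).erase (c - g - 1)) := by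
  have h := arithProg_add hn hg hm (c - g)
  rw [sub_add_cancel] at h
  have hmg := mul_lt_of_eq_mul_add_one hn
  rw [h]
  exact eq_insert_erase_of_card_insert_erase (self_mem_arithProg hm _)
    (by rw [← h, card_arithProg hg hmg, card_arithProg hg hmg])

lemma natCast_ne_zero_of_eq_mul_add_one (hn : n = g * m + 1) (hg : 0 < g) (hm : 0 < m) :
    (g : ZMod n) ≠ 0 :=
  natCast_ne_zero_of_lt hg
    (lt_of_le_of_lt (Nat.le_mul_of_pos_left g hm) (mul_lt_of_eq_mul_add_one hn))

lemma add_mem_arithProg_of_ne (hn : n = g * m + 1) (hg : 0 < g) (hm : 0 < m) {c a : ZMod n}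
    (ha : a ∈ arithProg m g c) (hlast : a ≠ c - g - 1) : a + g ∈ arithProg m g c := by
  have h := (add_mem_arithProg_add_iff (g : ZMod n)).2 ha
  rw [arithProg_add hn hg hm, mem_insert, mem_erase] at h
  refine (h.resolve_left fun h => hlast ?_).2
  linear_combination h

lemma sub_mem_arithProg_of_ne (hn : n = g * m + 1) (hg : 0 < g) (hm : 0 < m) {c a : ZMod n}
    (ha : a ∈ arithProg m g c) (hfirst : a ≠ c) : a - g ∈ arithProg m g c := by
  have h := (add_mem_arithProg_add_iff (-(g : ZMod n))).2 ha
  rw [← sub_eq_add_neg, ← sub_eq_add_neg] at h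
  have hc := arithProg_add hn hg hm (c - g)
  rw [sub_add_cancel] at hc
  rw [hc]
  exact mem_insert_of_mem (mem_erase.2 ⟨fun h => hfirst (by linear_combination h), h⟩)

lemma flipAdj_arithProg_add (hn : n = g * m + 1) (hg : 0 < g) (hm : 0 < m) (c : ZMod n) :
    flipAdj (arithProg m g c) (arithProg m g (c + g)) := by
  refine ⟨fun h => natCast_ne_zero_of_eq_mul_add_one hn hg hm ?_, c, self_mem_arithProg hm c,
    Or.inr (arithProg_add hn hg hm c)⟩
  linear_combination -arithProg_injective hn hg h

lemma flipAdj_arithProg_sub (hn : n = g * m + 1) (hg : 0 < g) (hm : 0 < m) (c : ZMod n) :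
    flipAdj (arithProg m g c) (arithProg m g (c - g)) := by
  have hlast : c - g - 1 ∈ arithProg m g c := by
    rw [← sub_add_cancel c (g : ZMod n), arithProg_add hn hg hm, sub_add_cancel]
    exact mem_insert_self _ _
  refine ⟨fun h => natCast_ne_zero_of_eq_mul_add_one hn hg hm ?_, c - g - 1, hlast, Or.inl ?_⟩
  · linear_combination arithProg_injective hn hg h
  · rw [sub_add_cancel, arithProg_sub hn hg hm]

lemma arithProg_add_ne_arithProg_sub (hn : n = g * m + 1) (hg : 0 < g) (hm : 2 ≤ m)
    (c : ZMod n) :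
    arithProg m g (c + (g : ZMod n)) ≠ arithProg m g (c - (g : ZMod n)) := fun h =>
  natCast_ne_zero_of_lt (n := n) (k := 2 * g) (by omega)
    (lt_of_le_of_lt (Nat.mul_le_mul_right g hm) (mul_lt_of_eq_mul_add_one hn))
    (by push_cast; linear_combination arithProg_injective hn hg h)

lemma eq_arithProg_of_flipAdj [NeZero n] (hn : n = g * m + 1) (hg : 0 < g) (hm : 0 < m)
    {c : ZMod n} {S : Finset (ZMod n)} (hS : IsSpread g S) (hcard : S.card = m)
    (h : flipAdj (arithProg m g c) S) :
    S = arithProg m g (c + (g : ZMod n)) ∨ S = arithProg m g (c - (g : ZMod n)) := by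
  have hg0 := natCast_ne_zero_of_eq_mul_add_one hn hg hm
  have hcard' : S.card = (arithProg m g c).card := by
    rw [hcard, card_arithProg hg (mul_lt_of_eq_mul_add_one hn)]
  have hgk : ((g - 1 : ℕ) : ZMod n) = g - 1 := by rw [Nat.cast_sub hg, Nat.cast_one]
  obtain ⟨-, a, ha, rfl | rfl⟩ := h
  · refine Or.inr ?_
    by_cases hlast : a = c - g - 1
    · rw [hlast, sub_add_cancel, arithProg_sub hn hg hm]
    · have hy : a + (g : ZMod n) ∈ (arithProg m g c).erase a :=
        mem_erase.2 ⟨by simpa using hg0, add_mem_arithProg_of_ne hn hg hm ha hlast⟩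
      have hfar := hS.le_cycDist_of_insert_erase hcard' ha hy
      have hnear := cycDist_add_natCast_le (a + 1) (g - 1)
      rw [hgk, cycDist_comm, show a + 1 + (g - 1 : ZMod n) = a + g by ring] at hnear
      omega
  · refine Or.inl ?_
    by_cases hfirst : a = c
    · rw [hfirst, arithProg_add hn hg hm]
    · have hy : a - (g : ZMod n) ∈ (arithProg m g c).erase a :=
        mem_erase.2 ⟨by simpa using hg0, sub_mem_arithProg_of_ne hn hg hm ha hfirst⟩
      have hfar := hS.le_cycDist_of_insert_erase hcard' ha hy
      have hnear := cycDist_add_natCast_le (a - (g : ZMod n)) (g - 1)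
      rw [hgk, show a - g + (g - 1 : ZMod n) = a - 1 by ring] at hnear
      omega

end Cycle

section Classification

variable {n m g : ℕ} {S : Finset (ZMod n)}

def rightThickening (g : ℕ) (S : Finset (ZMod n)) : Finset (ZMod n) :=
  S + (range g).image (↑)

lemma mem_rightThickening {x : ZMod n} :
    x ∈ rightThickening g S ↔ ∃ a ∈ S, ∃ i < g, a + (i : ZMod n) = x := by
  simp [rightThickening, mem_add]

lemma mem_of_mem_rightThickening {x : ZMod n} (hx : x ∈ rightThickening g S)
    (h : ∀ b ∈ S, ∀ i < g - 1, b + (i : ZMod n) ≠ x - 1) : x ∈ S := by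
  obtain ⟨b, hb, i, hi, rfl⟩ := mem_rightThickening.1 hx
  obtain _ | i := i
  · simpa using hb
  · exact absurd (by push_cast; ring) (h b hb i (by omega))

lemma IsSpread.card_rightThickening (hS : IsSpread g S) (hgn : g < n) :
    (rightThickening g S).card = S.card * g := by
  have hcast : Set.InjOn (Nat.cast : ℕ → ZMod n) (range g) := fun i hi j hj h =>
    (natCast_inj_of_lt (by simp at hi; omega) (by simp at hj; omega)).1 h
  rw [rightThickening, card_add_iff.2, card_image_of_injOn hcast, card_range]
  rintro ⟨a, _⟩ ⟨ha, hi⟩ ⟨b, _⟩ ⟨hb, hj⟩ h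
  simp only [coe_image, coe_range, Set.mem_image, Set.mem_Iio] at hi hj
  obtain ⟨i, hi, rfl⟩ := hi
  obtain ⟨j, hj, rfl⟩ := hj
  simp only at ha hb h
  obtain rfl := hS.eq_of_add_eq_add ha hb hi hj h
  rw [add_left_cancel h]

lemma IsSpread.add_mem_of_mem_rightThickening (hS : IsSpread g S) (hgn : g < n) {a : ZMod n}
    (ha : a ∈ S) (hx : a + (g : ZMod n) ∈ rightThickening g S) : a + (g : ZMod n) ∈ S := by
  refine mem_of_mem_rightThickening hx fun b hb i hi h => ?_
  have hga : a + g - 1 = a + ((g - 1 : ℕ) : ZMod n) := by rw [Nat.cast_sub (by omega)]; ring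
  obtain rfl := hS.eq_of_add_eq_add hb ha (by omega) (by omega) (h.trans hga)
  have := (natCast_inj_of_lt (n := n) (a := i) (b := g - 1) (by omega) (by omega)).1
    (add_left_cancel (h.trans hga))
  omega

lemma IsSpread.exists_arithProg_eq [NeZero n] (hn : n = g * m + 1) (hg : 0 < g) (hm : 0 < m)
    (hS : IsSpread g S) (hcard : S.card = m) : ∃ c, arithProg m g c = S := by
  have hmg := mul_lt_of_eq_mul_add_one hn
  have hgn : g < n := lt_of_le_of_lt (Nat.le_mul_of_pos_left g hm) hmg
  obtain ⟨p, hp⟩ : ∃ p, (rightThickening g S)ᶜ = {p} := card_eq_one.1 (by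
    rw [card_compl, ZMod.card, hS.card_rightThickening hgn, hcard, hn, mul_comm]
    omega)
  have hcover : ∀ x, x ∈ rightThickening g S ↔ x ≠ p := fun x => by
    rw [Ne, ← mem_singleton, ← hp, mem_compl, not_not]
  have hmem : ∀ k < m, p + 1 + ((k * g : ℕ) : ZMod n) ∈ S := by
    intro k hk
    induction k with
    | zero =>
      rw [zero_mul, Nat.cast_zero, add_zero]
      refine mem_of_mem_rightThickening ((hcover _).2 fun h => ?_) fun b hb i hi h => ?_
      · exact natCast_ne_zero_of_lt (n := n) one_pos (by omega)
          (by push_cast; linear_combination h)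
      · exact (hcover p).1 (mem_rightThickening.2 ⟨b, hb, i, by omega, by rw [h]; ring⟩) rfl
    | succ k ih =>
      have hkg : (k + 1) * g < m * g := Nat.mul_lt_mul_of_pos_right hk hg
      rw [show p + 1 + (((k + 1) * g : ℕ) : ZMod n) = p + 1 + ((k * g : ℕ) : ZMod n) + g by
        push_cast; ring]
      refine hS.add_mem_of_mem_rightThickening hgn (ih (by omega)) ((hcover _).2 fun h => ?_)
      refine natCast_ne_zero_of_lt (n := n) (k := (k + 1) * g + 1) (by omega) (by omega) ?_
      push_cast at h ⊢
      linear_combination h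
  refine ⟨p + 1, eq_of_subset_of_card_le (fun x hx => ?_) ?_⟩
  · obtain ⟨k, hk, rfl⟩ := mem_arithProg.1 hx
    exact hmem k hk
  · rw [hcard, card_arithProg hg hmg]

end Classification

lemma reflTransGen_of_step_isUnit {n : ℕ} [NeZero n] {β : Type*} {r : β → β → Prop}
    (f : ZMod n → β) {u : ZMod n} (hu : IsUnit u) (h : ∀ x, r (f x) (f (x + u)))
    (x y : ZMod n) :
    Relation.ReflTransGen r (f x) (f y) := by
  have hiter : ∀ t : ℕ, Relation.ReflTransGen r (f x) (f (x + t * u)) := by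
    intro t
    induction t with
    | zero => rw [Nat.cast_zero, zero_mul, add_zero]
    | succ t ih => exact ih.tail (by rw [Nat.cast_succ, add_one_mul, ← add_assoc]; exact h _)
  obtain ⟨v, hv⟩ := hu.exists_right_inv
  have := hiter ((y - x) * v).val
  rwa [ZMod.natCast_zmod_val, mul_assoc, mul_comm v u, hv, mul_one, add_sub_cancel] at this

section FlipGraph

variable {n m g : ℕ} [NeZero n]

lemma card_eq_and_isSpread_iff (hn : n = g * m + 1) (hg : 0 < g) (hm : 0 < m)
    {S : Finset (ZMod n)} : S.card = m ∧ IsSpread g S ↔ ∃ c, arithProg m g c = S := by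
  have hmg := mul_lt_of_eq_mul_add_one hn
  refine ⟨fun ⟨hcard, hS⟩ => hS.exists_arithProg_eq hn hg hm hcard, ?_⟩
  rintro ⟨c, rfl⟩
  exact ⟨card_arithProg hg hmg c, isSpread_arithProg hg hmg c⟩

lemma flipAdj_arithProg_iff (hn : n = g * m + 1) (hg : 0 < g) (hm : 0 < m) {c : ZMod n}
    {S : Finset (ZMod n)} :
    (∃ d, arithProg m g d = S) ∧ flipAdj (arithProg m g c) S ↔
      S = arithProg m g (c + (g : ZMod n)) ∨ S = arithProg m g (c - (g : ZMod n)) := by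
  have hmg := mul_lt_of_eq_mul_add_one hn
  constructor
  · rintro ⟨⟨d, rfl⟩, h⟩
    exact eq_arithProg_of_flipAdj hn hg hm (isSpread_arithProg hg hmg d)
      (card_arithProg hg hmg d) h
  · rintro (rfl | rfl)
    · exact ⟨⟨_, rfl⟩, flipAdj_arithProg_add hn hg hm c⟩
    · exact ⟨⟨_, rfl⟩, flipAdj_arithProg_sub hn hg hm c⟩

end FlipGraph

/-- **`Φ_{m,gm+1,g}` is a cycle of length `gm+1`.** For `m ≥ 2`, `g ≥ 1` and
`n = g·m + 1`, the flip graph on the `g`-spread `m`-element subsets of `ZMod n`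
is isomorphic to the cycle on `g·m+1` vertices: it has exactly `g·m+1`
vertices, each vertex has exactly two neighbors, and it is connected. -/
theorem cohomology_of_colorings_of_cycles_stmt17
    (m g n : ℕ) (hm : 2 ≤ m) (hg : 1 ≤ g) (hn : n = g * m + 1) [NeZero n] :
    (Finset.univ.filter (fun S : Finset (ZMod n) =>
        S.card = m ∧ ∀ a ∈ S, ∀ b ∈ S, a ≠ b → g ≤ cycDist a b)).card = g * m + 1 ∧
    (∀ S : Finset (ZMod n),
      (S.card = m ∧ ∀ a ∈ S, ∀ b ∈ S, a ≠ b → g ≤ cycDist a b) →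
      (Finset.univ.filter (fun S' : Finset (ZMod n) =>
        (S'.card = m ∧ ∀ a ∈ S', ∀ b ∈ S', a ≠ b → g ≤ cycDist a b) ∧
        flipAdj S S')).card = 2) ∧
    (∀ S S' : Finset (ZMod n),
      (S.card = m ∧ ∀ a ∈ S, ∀ b ∈ S, a ≠ b → g ≤ cycDist a b) →
      (S'.card = m ∧ ∀ a ∈ S', ∀ b ∈ S', a ≠ b → g ≤ cycDist a b) →
      Relation.ReflTransGen (fun A B : Finset (ZMod n) =>
        (A.card = m ∧ ∀ a ∈ A, ∀ b ∈ A, a ≠ b → g ≤ cycDist a b) ∧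
        (B.card = m ∧ ∀ a ∈ B, ∀ b ∈ B, a ≠ b → g ≤ cycDist a b) ∧
        flipAdj A B) S S') := by
  have hm0 : 0 < m := by omega
  have hV : ∀ S : Finset (ZMod n),
      (S.card = m ∧ ∀ a ∈ S, ∀ b ∈ S, a ≠ b → g ≤ cycDist a b) ↔
        ∃ c, arithProg m g c = S :=
    fun _ => card_eq_and_isSpread_iff hn hg hm0
  simp only [hV]
  refine ⟨?_, ?_, ?_⟩
  · have hvert : univ.filter (fun S => ∃ c, arithProg m g c = S) =
        univ.image (arithProg m g : ZMod n → Finset (ZMod n)) := by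
      ext S
      simp
    rw [hvert, card_image_of_injective _ (arithProg_injective hn hg), card_univ, ZMod.card, hn]
  · rintro _ ⟨c, rfl⟩
    rw [← card_pair (arithProg_add_ne_arithProg_sub hn hg hm c)]
    congr 1
    ext S
    simp only [mem_filter, mem_univ, true_and, mem_insert, mem_singleton]
    exact flipAdj_arithProg_iff hn hg hm0
  · rintro _ _ ⟨c, rfl⟩ ⟨c', rfl⟩
    exact reflTransGen_of_step_isUnit _ (isUnit_natCast_of_eq_mul_add_one hn)
      (fun d => ⟨⟨d, rfl⟩, ⟨d + g, rfl⟩, flipAdj_arithProg_add hn hg hm0 d⟩) c c'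
end
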